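/- arXiv:2107.04185 — 3 statements merged into one kernel-verified Lean document; each statement's English description precedes it below -/
import Mathlib

section
/- Let a be an action profile in ℝⁿ all of whose entries are strictly positive. If a is Pareto efficient, then the spectral radius of the benefits matrix B(a) equals 1. -/
/-!
At an interior Pareto-efficient profile no direction `d` raises every utility to first order,
so `J(a) d > 0` has no solution. By Gordan's alternative there are weights `θ ≥ 0`, `θ ≠ 0`, with
`θ J(a) = 0`; rescaled to `φ_i = θ_i (-J_ii(a))` they satisfy `φ B(a) = φ`. Irreducibility of the
nonnegative matrix `B(a)` makes `φ` strictly positive, and for a nonnegative matrix with a strictly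
positive left fixed vector `φ`, comparing `φ ⬝ |v|` on an eigenvector `v` bounds every eigenvalue
by `1` in modulus, while `1` itself is an eigenvalue.
-/

open Matrix

/-- The spectral radius of a real square matrix: the largest modulus of a
(complex) eigenvalue, i.e. of an element of the spectrum of the matrix viewed
over `ℂ`. -/
noncomputable def specRad {n : ℕ} (M : Matrix (Fin n) (Fin n) ℝ) : ℝ :=
  sSup ((fun z : ℂ => ‖z‖) '' spectrum ℂ (M.map (Complex.ofReal : ℝ → ℂ)))

/-- The nonnegative orthant `ℝ₊ⁿ`, the domain of action profiles. -/
def nonnegOrthant (n : ℕ) : Set (Fin n → ℝ) := {x | ∀ i, 0 ≤ x i}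

/-- The Jacobian matrix of the utility profile `u` at `a`:
`Jmat u a i j = ∂u_i/∂a_j (a)`. -/
noncomputable def Jmat {n : ℕ} (u : Fin n → (Fin n → ℝ) → ℝ) (a : Fin n → ℝ) :
    Matrix (Fin n) (Fin n) ℝ :=
  Matrix.of fun i j => fderiv ℝ (u i) a (Pi.single j 1)

/-- The benefits matrix `B(a)`: `B_ij = J_ij / (-J_ii)` off the diagonal and
`B_ii = 0`. -/
noncomputable def Bmat {n : ℕ} (u : Fin n → (Fin n → ℝ) → ℝ) (a : Fin n → ℝ) :
    Matrix (Fin n) (Fin n) ℝ :=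
  Matrix.of fun i j => if i = j then 0 else Jmat u a i j / (- Jmat u a i i)

/-- A nonnegative matrix is irreducible when every pair of indices is
connected by some power of the matrix. -/
def MatIrreducible {n : ℕ} (M : Matrix (Fin n) (Fin n) ℝ) : Prop :=
  ∀ i j, ∃ k : ℕ, 1 ≤ k ∧ 0 < (M ^ k) i j

/-- `a` can be Pareto improved upon within the nonnegative orthant. -/
def ParetoImprovable {n : ℕ} (u : Fin n → (Fin n → ℝ) → ℝ) (a : Fin n → ℝ) : Prop :=
  ∃ a' : Fin n → ℝ, (∀ i, 0 ≤ a' i) ∧ (∀ i, u i a ≤ u i a') ∧ ∃ i, u i a < u i a'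

open Filter Topology

lemma HasDerivAt.eventually_lt_of_pos {g : ℝ → ℝ} {g' x : ℝ} (hg : HasDerivAt g g' x)
    (hg' : 0 < g') : ∀ᶠ t in 𝓝[>] x, g x < g t := by
  have hslope : ∀ᶠ t in 𝓝[≠] x, 0 < slope g x t :=
    (hasDerivAt_iff_tendsto_slope.mp hg).eventually (eventually_gt_nhds hg')
  filter_upwards [hslope.filter_mono (nhdsGT_le_nhdsNE x), self_mem_nhdsWithin] with t ht hxt
  exact (slope_pos_iff_of_le (le_of_lt hxt)).mp ht

lemma DifferentiableAt.eventually_lt_add_smul {E : Type*} [NormedAddCommGroup E]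
    [NormedSpace ℝ E] {f : E → ℝ} {a d : E} (hf : DifferentiableAt ℝ f a)
    (hd : 0 < fderiv ℝ f a d) : ∀ᶠ t in 𝓝[>] (0 : ℝ), f a < f (a + t • d) := by
  have hline : HasDerivAt (fun t : ℝ => a + t • d) d 0 := by
    simpa using ((hasDerivAt_id (0 : ℝ)).smul_const d).const_add a
  have hf' : HasFDerivAt f (fderiv ℝ f a) (a + (0 : ℝ) • d) := by simpa using hf.hasFDerivAt
  simpa using (hf'.comp_hasDerivAt 0 hline).eventually_lt_of_pos hd

lemma LinearMap.apply_eq_dotProduct {R ι : Type*} [CommSemiring R] [Fintype ι] [DecidableEq ι]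
    (f : (ι → R) →ₗ[R] R) (x : ι → R) : f x = (fun i => f (Pi.single i 1)) ⬝ᵥ x := by
  rw [f.pi_apply_eq_sum_univ x, dotProduct]
  refine Finset.sum_congr rfl fun i _ => ?_
  rw [smul_eq_mul, mul_comm]
  congr 2
  ext j
  simp [Pi.single_apply, eq_comm]

lemma LinearMap.apply_eq_zero_of_bddBelow {E : Type*} [AddCommGroup E] [Module ℝ E]
    (f : E →ₗ[ℝ] ℝ) {p : Submodule ℝ E} (hf : BddBelow (f '' p)) {y : E} (hy : y ∈ p) :
    f y = 0 := by
  obtain ⟨c, hc⟩ := hf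
  by_contra hne
  have := hc ⟨((c - 1) / f y) • y, p.smul_mem _ hy, rfl⟩
  rw [map_smul, smul_eq_mul, div_mul_cancel₀ _ hne] at this
  linarith

theorem Matrix.exists_vecMul_eq_zero_of_not_exists_mulVec_pos {m ι : Type*} [Fintype m]
    [Fintype ι] (J : Matrix m ι ℝ) (h : ¬ ∃ d, ∀ i, 0 < (J *ᵥ d) i) :
    ∃ θ : m → ℝ, 0 ≤ θ ∧ θ ≠ 0 ∧ θ ᵥ* J = 0 := by
  classical
  set s : Set (m → ℝ) := Set.univ.pi fun _ => Set.Ioi 0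
  have hdisj : Disjoint s (LinearMap.range J.mulVecLin : Set (m → ℝ)) :=
    Set.disjoint_left.2 <| by rintro x hx ⟨d, rfl⟩; exact h ⟨d, fun i => hx i trivial⟩
  obtain ⟨f, c, hfs, hfJ⟩ := geometric_hahn_banach_open (convex_pi fun _ _ => convex_Ioi 0)
    (isOpen_set_pi Set.finite_univ fun _ _ => isOpen_Ioi) (Submodule.convex _) hdisj
  have hc : c ≤ 0 := by simpa using hfJ 0 (zero_mem _)
  have hfJ0 : ∀ d, f (J *ᵥ d) = 0 := fun d =>
    (f : (m → ℝ) →ₗ[ℝ] ℝ).apply_eq_zero_of_bddBelow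
      ⟨c, by rintro _ ⟨y, hy, rfl⟩; exact hfJ y hy⟩ (LinearMap.mem_range_self _ d)
  have hclosure : ∀ x, 0 ≤ x → f x ≤ c := by
    have : closure s ⊆ {x | f x ≤ c} :=
      closure_minimal (fun x hx => (hfs x hx).le) (isClosed_le f.continuous continuous_const)
    rw [closure_pi_set] at this
    simp only [closure_Ioi] at this
    exact fun x hx => this fun i _ => hx i
  set w : m → ℝ := fun i => f (Pi.single i 1)
  have hw : ∀ x, f x = w ⬝ᵥ x := (f : (m → ℝ) →ₗ[ℝ] ℝ).apply_eq_dotProduct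
  refine ⟨-w, fun i => neg_nonneg.2 ((hclosure _ (Pi.single_nonneg.2 zero_le_one)).trans hc),
    fun h0 => ?_, ?_⟩
  · have := hfs 1 fun _ _ => show (0 : ℝ) < 1 from one_pos
    rw [hw, neg_eq_zero.1 h0, zero_dotProduct] at this
    linarith
  · ext j
    have := hfJ0 (Pi.single j 1)
    rw [hw, dotProduct_mulVec, dotProduct_single_one] at this
    simp [neg_vecMul, this]

lemma not_exists_fderiv_pos_of_not_paretoImprovable {n : ℕ} (hn : 1 ≤ n)
    {u : Fin n → (Fin n → ℝ) → ℝ} {a : Fin n → ℝ} (hdiff : ∀ i, DifferentiableAt ℝ (u i) a)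
    (ha : ∀ i, 0 < a i) (hpareto : ¬ ParetoImprovable u a) :
    ¬ ∃ d, ∀ i, 0 < fderiv ℝ (u i) a d := by
  rintro ⟨d, hd⟩
  have hline : Tendsto (fun t : ℝ => a + t • d) (𝓝 0) (𝓝 a) := by
    have hcont : Continuous fun t : ℝ => a + t • d := by fun_prop
    simpa using hcont.tendsto 0
  have hinterior : ∀ᶠ t in 𝓝 (0 : ℝ), ∀ i, 0 < (a + t • d) i :=
    eventually_all.2 fun i => (tendsto_pi_nhds.1 hline i).eventually (eventually_gt_nhds (ha i))
  have hgain : ∀ᶠ t in 𝓝[>] (0 : ℝ), ∀ i, u i a < u i (a + t • d) :=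
    eventually_all.2 fun i => (hdiff i).eventually_lt_add_smul (hd i)
  obtain ⟨t, hgain, hpos⟩ := (hgain.and (hinterior.filter_mono nhdsWithin_le_nhds)).exists
  exact hpareto ⟨a + t • d, fun i => (hpos i).le, fun i => (hgain i).le, ⟨0, hn⟩, hgain _⟩

lemma Jmat_mulVec {n : ℕ} (u : Fin n → (Fin n → ℝ) → ℝ) (a d : Fin n → ℝ) :
    Jmat u a *ᵥ d = fun i => fderiv ℝ (u i) a d := by
  ext i
  exact ((fderiv ℝ (u i) a : (Fin n → ℝ) →ₗ[ℝ] ℝ).apply_eq_dotProduct d).symm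

lemma Bmat_nonneg {n : ℕ} {u : Fin n → (Fin n → ℝ) → ℝ} {a : Fin n → ℝ}
    (hdiag : ∀ i, Jmat u a i i < 0) (hoff : ∀ i j, i ≠ j → 0 ≤ Jmat u a i j) (i j : Fin n) :
    0 ≤ Bmat u a i j := by
  by_cases h : i = j
  · simp [Bmat, h]
  · simpa [Bmat, h] using div_nonneg (hoff i j h) (neg_pos.2 (hdiag i)).le

lemma vecMul_Bmat {n : ℕ} {u : Fin n → (Fin n → ℝ) → ℝ} {a : Fin n → ℝ}
    (hdiag : ∀ i, Jmat u a i i ≠ 0) (θ : Fin n → ℝ) :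
    (fun i => θ i * -Jmat u a i i) ᵥ* Bmat u a
      = θ ᵥ* Jmat u a + fun i => θ i * -Jmat u a i i := by
  ext j
  have hterm : ∀ i, θ i * -Jmat u a i i * Bmat u a i j
      = θ i * Jmat u a i j - if i = j then θ i * Jmat u a i i else 0 := by
    intro i
    by_cases h : i = j
    · subst h; simp [Bmat]
    · simp only [Bmat, of_apply, if_neg h]
      field_simp [hdiag i]
      ring
  simp only [vecMul, dotProduct, Pi.add_apply, hterm, Finset.sum_sub_distrib,
    Finset.sum_ite_eq', Finset.mem_univ, if_true]
  ring

lemma Matrix.vecMul_pow_eq_self {R ι : Type*} [CommSemiring R] [Fintype ι] [DecidableEq ι]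
    {B : Matrix ι ι R} {φ : ι → R} (h : φ ᵥ* B = φ) (k : ℕ) : φ ᵥ* B ^ k = φ := by
  induction k with
  | zero => simp
  | succ k ih => rw [pow_succ, ← vecMul_vecMul, ih, h]

lemma MatIrreducible.pos_of_vecMul_eq_self {n : ℕ} {B : Matrix (Fin n) (Fin n) ℝ}
    (hirr : MatIrreducible B) (hB : ∀ i j, 0 ≤ B i j) {φ : Fin n → ℝ} (hφ : 0 ≤ φ)
    (hφ0 : φ ≠ 0) (hfix : φ ᵥ* B = φ) (j : Fin n) : 0 < φ j := by
  obtain ⟨i, hi⟩ := Function.ne_iff.1 hφ0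
  obtain ⟨k, -, hk⟩ := hirr i j
  rw [← vecMul_pow_eq_self hfix k]
  calc 0 < φ i * (B ^ k) i j := mul_pos ((hφ i).lt_of_ne' hi) hk
    _ ≤ ∑ m, φ m * (B ^ k) m j :=
      Finset.single_le_sum (fun m _ => mul_nonneg (hφ m) (pow_apply_nonneg hB k m j))
        (Finset.mem_univ i)

lemma Matrix.one_mem_spectrum_map_ofReal {ι : Type*} [Fintype ι] [DecidableEq ι]
    {B : Matrix ι ι ℝ} {φ : ι → ℝ} (hφ0 : φ ≠ 0) (hfix : φ ᵥ* B = φ) :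
    (1 : ℂ) ∈ spectrum ℂ (B.map (Complex.ofReal : ℝ → ℂ)) := by
  have hT : (1 : ℝ) ∈ spectrum ℝ Bᵀ := by
    rw [← spectrum_toLin']
    refine (Module.End.hasEigenvalue_of_hasEigenvector (x := φ) ?_).mem_spectrum
    rw [Module.End.hasEigenvector_iff, Module.End.mem_eigenspace_iff, toLin'_apply,
      mulVec_transpose, hfix, one_smul]
    exact ⟨rfl, hφ0⟩
  rw [mem_spectrum_iff_isRoot_charpoly, charpoly_transpose] at hT
  rw [mem_spectrum_iff_isRoot_charpoly,
    show B.map Complex.ofReal = B.map Complex.ofRealHom from rfl, charpoly_map, Polynomial.IsRoot, Polynomial.eval_map, Polynomial.eval₂_at_one, hT.eq_zero,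
    map_zero]

lemma Matrix.norm_le_one_of_mem_spectrum_map_ofReal {ι : Type*} [Fintype ι] [DecidableEq ι]
    {B : Matrix ι ι ℝ} (hB : ∀ i j, 0 ≤ B i j) {φ : ι → ℝ} (hφ : ∀ i, 0 < φ i)
    (hfix : φ ᵥ* B = φ) {z : ℂ} (hz : z ∈ spectrum ℂ (B.map (Complex.ofReal : ℝ → ℂ))) :
    ‖z‖ ≤ 1 := by
  rw [← spectrum_toLin', ← Module.End.hasEigenvalue_iff_mem_spectrum] at hz
  obtain ⟨v, hv⟩ := hz.exists_hasEigenvector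
  have hMv : B.map Complex.ofReal *ᵥ v = z • v := by
    rw [← toLin'_apply]; exact hv.apply_eq_smul
  set w : ι → ℝ := fun j => ‖v j‖
  have hrow : ‖z‖ • w ≤ B *ᵥ w := fun i => by
    calc ‖z‖ * w i = ‖(B.map Complex.ofReal *ᵥ v) i‖ := by simp [hMv, w]
      _ ≤ ∑ j, ‖(B i j : ℂ) * v j‖ := norm_sum_le _ _
      _ = (B *ᵥ w) i := by simp [mulVec, dotProduct, Real.norm_of_nonneg (hB _ _), w]
  have hw : 0 < φ ⬝ᵥ w := by
    obtain ⟨j, hj⟩ := Function.ne_iff.1 hv.2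
    exact Finset.sum_pos' (fun i _ => mul_nonneg (hφ i).le (norm_nonneg _))
      ⟨j, Finset.mem_univ j, mul_pos (hφ j) (norm_pos_iff.2 hj)⟩
  refine le_of_mul_le_mul_right ?_ hw
  calc ‖z‖ * (φ ⬝ᵥ w) = φ ⬝ᵥ (‖z‖ • w) := by rw [dotProduct_smul, smul_eq_mul]
    _ ≤ φ ⬝ᵥ (B *ᵥ w) := dotProduct_le_dotProduct_of_nonneg_left hrow fun i => (hφ i).le
    _ = 1 * (φ ⬝ᵥ w) := by rw [dotProduct_mulVec, hfix, one_mul]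

lemma specRad_eq_one_of_vecMul_eq_self {n : ℕ} {B : Matrix (Fin n) (Fin n) ℝ}
    (hB : ∀ i j, 0 ≤ B i j) {φ : Fin n → ℝ} (hφ : ∀ i, 0 < φ i) (hφ0 : φ ≠ 0)
    (hfix : φ ᵥ* B = φ) : specRad B = 1 := by
  have hub : ∀ x ∈ (fun z : ℂ => ‖z‖) '' spectrum ℂ (B.map Complex.ofReal), x ≤ 1 := by
    rintro _ ⟨z, hz, rfl⟩
    exact norm_le_one_of_mem_spectrum_map_ofReal hB hφ hfix hz
  have hone : (1 : ℝ) ∈ (fun z : ℂ => ‖z‖) '' spectrum ℂ (B.map Complex.ofReal) :=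
    ⟨1, one_mem_spectrum_map_ofReal hφ0 hfix, norm_one⟩
  exact le_antisymm (csSup_le ⟨1, hone⟩ hub) (le_csSup ⟨1, hub⟩ hone)

theorem stmt0_general {n : ℕ} (hn : 1 ≤ n)
    (u : Fin n → (Fin n → ℝ) → ℝ)
    (hdiff : ∀ i, ContDiff ℝ 1 (u i))
    (hCA : ∀ a ∈ nonnegOrthant n, ∀ i, Jmat u a i i < 0)
    (hPE : ∀ a ∈ nonnegOrthant n, ∀ i j, i ≠ j → 0 ≤ Jmat u a i j)
    (hirr : ∀ a ∈ nonnegOrthant n, MatIrreducible (Bmat u a))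
    (a : Fin n → ℝ) (ha : ∀ i, 0 < a i)
    (hpareto : ¬ ParetoImprovable u a) :
    specRad (Bmat u a) = 1 := by
  have hanon : a ∈ nonnegOrthant n := fun i => (ha i).le
  have hdiag := hCA a hanon
  have hnoimp : ¬ ∃ d, ∀ i, 0 < (Jmat u a *ᵥ d) i := by
    simpa only [Jmat_mulVec] using not_exists_fderiv_pos_of_not_paretoImprovable hn
      (fun i => (hdiff i).differentiable one_ne_zero a) ha hpareto
  obtain ⟨θ, hθ, hθ0, hθJ⟩ := (Jmat u a).exists_vecMul_eq_zero_of_not_exists_mulVec_pos hnoimp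
  set φ : Fin n → ℝ := fun i => θ i * -Jmat u a i i
  have hfix : φ ᵥ* Bmat u a = φ := by
    rw [vecMul_Bmat (fun i => (hdiag i).ne), hθJ, zero_add]
  have hφ0 : φ ≠ 0 := fun h => hθ0 <| funext fun i => by
    simpa [φ, (hdiag i).ne] using congrFun h i
  have hφ : 0 ≤ φ := fun i => mul_nonneg (hθ i) (neg_nonneg.2 (hdiag i).le)
  have hB := Bmat_nonneg hdiag (hPE a hanon)
  exact specRad_eq_one_of_vecMul_eq_self hB
    ((hirr a hanon).pos_of_vecMul_eq_self hB hφ hφ0 hfix) hφ0 hfix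

/-- If an interior (strictly positive) action profile `a` is Pareto efficient,
then the spectral radius of the benefits matrix `B(a)` equals `1`. -/
theorem stmt0 {n : ℕ} (hn : 1 ≤ n)
    (u : Fin n → (Fin n → ℝ) → ℝ)
    (hconc : ∀ i, ConcaveOn ℝ (nonnegOrthant n) (u i))
    (hdiff : ∀ i, ContDiff ℝ 1 (u i))
    (hCA : ∀ a ∈ nonnegOrthant n, ∀ i, Jmat u a i i < 0)
    (hPE : ∀ a ∈ nonnegOrthant n, ∀ i j, i ≠ j → 0 ≤ Jmat u a i j)
    (hirr : ∀ a ∈ nonnegOrthant n, MatIrreducible (Bmat u a))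
    (a : Fin n → ℝ) (ha : ∀ i, 0 < a i)
    (hpareto : ¬ ParetoImprovable u a) :
    specRad (Bmat u a) = 1 :=
  stmt0_general hn u hdiff hCA hPE hirr a ha hpareto
end

section
/- Let a* ∈ ℝ₊ⁿ be nonzero and satisfy the centrality property B(a*) a* = a*. Then a* is a Lindahl outcome: there exists an n×n real price matrix P such that (i) for every i, Σ_{j≠i} P_ij a*_j ≤ a*_i Σ_{j≠i} P_ji, and (ii) for every i and every a ∈ ℝ₊ⁿ with Σ_{j≠i} P_ij a_j ≤ a_i Σ_{j≠i} P_ji, one has u_i(a*) ≥ u_i(a). -/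
/-!
Write `J = Jmat u a*` and `B = Bmat u a*`; then `J = diag(J_ii) (1 - B)` with `J_ii < 0`, so
centrality says exactly `J a* = 0`. The matrix `B ≥ 0` is irreducible and fixes `a* ≥ 0`, so it
also has a positive left fixed vector `π`: for any `z ≠ 0` with `z B = z`, `|z| ≤ |z| B`, and
pairing with `a* > 0` forces equality. Then `w = π / (-J_ii) > 0` satisfies `w J = 0`, and with
prices `P_ij = w_i J_ij` agent `i`'s budget constraint at `x` reads `w_i (J x)_i ≤ 0`. It holds
with equality at `a*`, and for any affordable `x` concavity gives
`u_i x ≤ u_i a* + ∇u_i(a*) ⬝ (x - a*) = u_i a* + (J x)_i ≤ u_i a*`.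
-/

open Matrix

/-- Agent `i`'s budget constraint at prices `P` holds at the profile `x`:
`Σ_{j≠i} P_ij x_j ≤ x_i Σ_{j≠i} P_ji`. -/
def BudgetOK {n : ℕ} (P : Matrix (Fin n) (Fin n) ℝ) (i : Fin n) (x : Fin n → ℝ) : Prop :=
  ∑ j ∈ Finset.univ.erase i, P i j * x j ≤ x i * ∑ j ∈ Finset.univ.erase i, P j i

/-- `a` is a Lindahl outcome for the utility profile `u`. -/
def IsLindahl {n : ℕ} (u : Fin n → (Fin n → ℝ) → ℝ) (a : Fin n → ℝ) : Prop :=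
  ∃ P : Matrix (Fin n) (Fin n) ℝ,
    (∀ i, BudgetOK P i a) ∧
    ∀ i, ∀ x : Fin n → ℝ, (∀ j, 0 ≤ x j) → BudgetOK P i x → u i x ≤ u i a

theorem ConcaveOn.le_add_fderiv {E : Type*} [NormedAddCommGroup E] [NormedSpace ℝ E]
    {s : Set E} {f : E → ℝ} {f' : E →L[ℝ] ℝ} {a x : E} (hf : ConcaveOn ℝ s f)
    (ha : a ∈ s) (hx : x ∈ s) (hf' : HasFDerivAt f f' a) :
    f x ≤ f a + f' (x - a) := by
  set L : ℝ →ᵃ[ℝ] E := AffineMap.lineMap a x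
  have hline : ConcaveOn ℝ (Set.Icc 0 1) (f ∘ L) :=
    (hf.comp_affineMap L).subset (fun t ht => hf.1.lineMap_mem ha hx ht) (convex_Icc 0 1)
  have hderiv : HasDerivAt (f ∘ L) (f' (x - a)) 0 :=
    (by simpa [L] using hf' : HasFDerivAt f f' (L 0)).comp_hasDerivAt 0
      AffineMap.hasDerivAt_lineMap
  have := hline.slope_le_of_hasDerivAt (by simp) (by simp) zero_lt_one hderiv
  simpa [slope_def_field, L, add_comm] using this

theorem jmat_mulVec_apply {n : ℕ} (u : Fin n → (Fin n → ℝ) → ℝ) (a y : Fin n → ℝ)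
    (i : Fin n) : (Jmat u a *ᵥ y) i = fderiv ℝ (u i) a y := by
  change ∑ j, fderiv ℝ (u i) a (Pi.single j 1) * y j = _
  conv_rhs => rw [← Finset.univ_sum_single y, map_sum]
  refine Finset.sum_congr rfl fun j _ => ?_
  have hsingle : (Pi.single j (y j) : Fin n → ℝ) = y j • Pi.single j 1 := by
    rw [← Pi.single_smul', smul_eq_mul, mul_one]
  rw [hsingle, map_smul, smul_eq_mul, mul_comm]

section NonnegMatrix

variable {n : ℕ} {M : Matrix (Fin n) (Fin n) ℝ}

theorem abs_le_abs_vecMul_of_vecMul_eq_self (hM : ∀ i j, 0 ≤ M i j) {z : Fin n → ℝ}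
    (hz : z ᵥ* M = z) (j : Fin n) : |z| j ≤ (|z| ᵥ* M) j :=
  calc |z| j = |∑ i, z i * M i j| := by rw [Pi.abs_apply, ← congrFun hz j]; rfl
    _ ≤ ∑ i, |z i * M i j| := Finset.abs_sum_le_sum_abs _ _
    _ = (|z| ᵥ* M) j := Finset.sum_congr rfl fun i _ => by
      rw [abs_mul, abs_of_nonneg (hM i j)]; rfl

theorem vecMul_eq_self_of_le_vecMul {π a : Fin n → ℝ} (hle : ∀ j, π j ≤ (π ᵥ* M) j)
    (ha : ∀ j, 0 < a j) (hMa : M *ᵥ a = a) : π ᵥ* M = π := by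
  have hdot : π ⬝ᵥ a = (π ᵥ* M) ⬝ᵥ a := by rw [← dotProduct_mulVec, hMa]
  have hterm := (Finset.sum_eq_sum_iff_of_le
    fun j _ => mul_le_mul_of_nonneg_right (hle j) (ha j).le).1 hdot
  funext j
  exact (mul_right_cancel₀ (ha j).ne' (hterm j (Finset.mem_univ j))).symm

end NonnegMatrix

namespace MatIrreducible

variable {n : ℕ} {M : Matrix (Fin n) (Fin n) ℝ}

theorem transpose (hirr : MatIrreducible M) : MatIrreducible Mᵀ := fun i j => by
  obtain ⟨k, hk, hpos⟩ := hirr j i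
  exact ⟨k, hk, by rwa [← transpose_pow]⟩

theorem pos_of_mulVec_eq_self (hirr : MatIrreducible M) (hM : ∀ i j, 0 ≤ M i j)
    {v : Fin n → ℝ} (hv : ∀ i, 0 ≤ v i) (hv0 : v ≠ 0) (hMv : M *ᵥ v = v) (i : Fin n) :
    0 < v i := by
  have hMkv (k : ℕ) : (M ^ k) *ᵥ v = v := by
    induction k with
    | zero => simp
    | succ k ih => rw [pow_succ, ← mulVec_mulVec, hMv, ih]
  obtain ⟨j, hj⟩ := Function.ne_iff.1 hv0
  obtain ⟨k, -, hk⟩ := hirr i j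
  calc 0 < (M ^ k) i j * v j := mul_pos hk ((hv j).lt_of_ne' hj)
    _ ≤ ∑ l, (M ^ k) i l * v l :=
      Finset.single_le_sum (fun l _ => mul_nonneg (pow_apply_nonneg hM k i l) (hv l))
        (Finset.mem_univ j)
    _ = v i := congrFun (hMkv k) i

theorem exists_pos_vecMul_eq_self (hirr : MatIrreducible M) (hM : ∀ i j, 0 ≤ M i j)
    {a : Fin n → ℝ} (ha : ∀ i, 0 ≤ a i) (ha0 : a ≠ 0) (hMa : M *ᵥ a = a) :
    ∃ π : Fin n → ℝ, (∀ i, 0 < π i) ∧ π ᵥ* M = π := by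
  obtain ⟨z, hz0, hz⟩ : ∃ z ≠ 0, z ᵥ* (M - 1) = 0 :=
    exists_vecMul_eq_zero_iff.2 <| exists_mulVec_eq_zero_iff.1
      ⟨a, ha0, by rw [sub_mulVec, hMa, one_mulVec, sub_self]⟩
  rw [vecMul_sub, vecMul_one, sub_eq_zero] at hz
  have hfix : |z| ᵥ* M = |z| := vecMul_eq_self_of_le_vecMul
    (abs_le_abs_vecMul_of_vecMul_eq_self hM hz) (hirr.pos_of_mulVec_eq_self hM ha ha0 hMa) hMa
  exact ⟨|z|, hirr.transpose.pos_of_mulVec_eq_self (fun i j => hM j i)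
    (fun i => abs_nonneg (z i)) (by simpa using hz0) (by rw [mulVec_transpose, hfix]), hfix⟩

end MatIrreducible

theorem budgetOK_diagonal_mul_iff {n : ℕ} {J : Matrix (Fin n) (Fin n) ℝ} {w : Fin n → ℝ}
    (hwJ : w ᵥ* J = 0) {i : Fin n} (hwi : 0 < w i) (x : Fin n → ℝ) :
    BudgetOK (diagonal w * J) i x ↔ (J *ᵥ x) i ≤ 0 := by
  have hcol : ∑ j ∈ Finset.univ.erase i, w j * J j i = -(w i * J i i) := by
    have h := congrFun hwJ i
    rw [vecMul, dotProduct, ← Finset.add_sum_erase _ _ (Finset.mem_univ i)] at h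
    simp only [Pi.zero_apply] at h
    linarith
  have hrow : (J *ᵥ x) i = J i i * x i + ∑ j ∈ Finset.univ.erase i, J i j * x j :=
    (Finset.add_sum_erase _ _ (Finset.mem_univ i)).symm
  have hgap : ∑ j ∈ Finset.univ.erase i, (diagonal w * J) i j * x j
      - x i * ∑ j ∈ Finset.univ.erase i, (diagonal w * J) j i = w i * (J *ᵥ x) i := by
    simp only [diagonal_mul, mul_assoc, ← Finset.mul_sum, hcol, hrow]
    ring
  rw [BudgetOK, ← sub_nonpos, hgap]
  simpa using mul_le_mul_iff_of_pos_left (b := (J *ᵥ x) i) (c := 0) hwi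

section Benefits

variable {n : ℕ} {u : Fin n → (Fin n → ℝ) → ℝ} {a : Fin n → ℝ}

theorem bmat_nonneg (hdiag : ∀ i, Jmat u a i i < 0)
    (hoff : ∀ i j, i ≠ j → 0 ≤ Jmat u a i j) (i j : Fin n) : 0 ≤ Bmat u a i j := by
  by_cases hij : i = j
  · simp [Bmat, hij]
  · simpa [Bmat, hij] using div_nonneg (hoff i j hij) (neg_nonneg.2 (hdiag i).le)

theorem jmat_eq_diagonal_mul_one_sub_bmat (hdiag : ∀ i, Jmat u a i i ≠ 0) :
    Jmat u a = diagonal (fun i => Jmat u a i i) * (1 - Bmat u a) := by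
  ext i j
  by_cases hij : i = j
  · subst hij; simp [Bmat]
  · simp only [Bmat, diagonal_mul, Matrix.sub_apply, one_apply, hij, ↓reduceIte, of_apply,
      zero_sub, mul_neg]
    field_simp [hdiag i]

theorem jmat_mulVec_eq_zero (hdiag : ∀ i, Jmat u a i i ≠ 0) (hcent : Bmat u a *ᵥ a = a) :
    Jmat u a *ᵥ a = 0 := by
  rw [jmat_eq_diagonal_mul_one_sub_bmat hdiag, ← mulVec_mulVec, sub_mulVec, hcent, one_mulVec,
    sub_self, mulVec_zero]

theorem vecMul_jmat_eq_zero (hdiag : ∀ i, Jmat u a i i ≠ 0) {π : Fin n → ℝ}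
    (hπ : π ᵥ* Bmat u a = π) : (fun i => π i / -Jmat u a i i) ᵥ* Jmat u a = 0 := by
  have hJ := jmat_eq_diagonal_mul_one_sub_bmat hdiag
  set J := Jmat u a
  calc (fun i => π i / -J i i) ᵥ* J
      = ((fun i => π i / -J i i) ᵥ* diagonal (fun i => J i i)) ᵥ* (1 - Bmat u a) := by
        rw [vecMul_vecMul, ← hJ]
    _ = (-π) ᵥ* (1 - Bmat u a) := by
        congr 1
        ext i
        rw [vecMul_diagonal, Pi.neg_apply, div_neg, neg_mul, div_mul_cancel₀ _ (hdiag i)]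
    _ = 0 := by rw [neg_vecMul, vecMul_sub, vecMul_one, hπ, sub_self, neg_zero]

end Benefits

theorem stmt7_general {n : ℕ}
    (u : Fin n → (Fin n → ℝ) → ℝ)
    (hconc : ∀ i, ConcaveOn ℝ (nonnegOrthant n) (u i))
    (hdiff : ∀ i, ContDiff ℝ 1 (u i))
    (hCA : ∀ a ∈ nonnegOrthant n, ∀ i, Jmat u a i i < 0)
    (hPE : ∀ a ∈ nonnegOrthant n, ∀ i j, i ≠ j → 0 ≤ Jmat u a i j)
    (hirr : ∀ a ∈ nonnegOrthant n, MatIrreducible (Bmat u a))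
    (astar : Fin n → ℝ) (hnn : ∀ i, 0 ≤ astar i) (hne : astar ≠ 0)
    (hcent : Bmat u astar *ᵥ astar = astar) :
    IsLindahl u astar := by
  have hmem : astar ∈ nonnegOrthant n := hnn
  have hdiag := hCA astar hmem
  obtain ⟨π, hπ, hπB⟩ := (hirr astar hmem).exists_pos_vecMul_eq_self
    (bmat_nonneg hdiag (hPE astar hmem)) hnn hne hcent
  set J := Jmat u astar
  set w : Fin n → ℝ := fun i => π i / -J i i
  have hw (i : Fin n) : 0 < w i := div_pos (hπ i) (neg_pos.2 (hdiag i))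
  have hwJ : w ᵥ* J = 0 := vecMul_jmat_eq_zero (fun i => (hdiag i).ne) hπB
  have hJa : J *ᵥ astar = 0 := jmat_mulVec_eq_zero (fun i => (hdiag i).ne) hcent
  refine ⟨diagonal w * J,
    fun i => (budgetOK_diagonal_mul_iff hwJ (hw i) astar).2 (by simp [hJa]),
    fun i x hx hbudget => ?_⟩
  calc u i x ≤ u i astar + fderiv ℝ (u i) astar (x - astar) :=
        (hconc i).le_add_fderiv hmem hx ((hdiff i).differentiable one_ne_zero astar).hasFDerivAt
    _ = u i astar + (J *ᵥ x) i := by rw [← jmat_mulVec_apply, mulVec_sub, hJa, sub_zero]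
    _ ≤ u i astar := by linarith [(budgetOK_diagonal_mul_iff hwJ (hw i) x).1 hbudget]

/-- If a nonzero nonnegative profile `astar` has the centrality property
`B(astar) astar = astar`, then `astar` is a Lindahl outcome. -/
theorem stmt7 {n : ℕ} (hn : 1 ≤ n)
    (u : Fin n → (Fin n → ℝ) → ℝ)
    (hconc : ∀ i, ConcaveOn ℝ (nonnegOrthant n) (u i))
    (hdiff : ∀ i, ContDiff ℝ 1 (u i))
    (hCA : ∀ a ∈ nonnegOrthant n, ∀ i, Jmat u a i i < 0)
    (hPE : ∀ a ∈ nonnegOrthant n, ∀ i j, i ≠ j → 0 ≤ Jmat u a i j)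
    (hirr : ∀ a ∈ nonnegOrthant n, MatIrreducible (Bmat u a))
    (astar : Fin n → ℝ) (hnn : ∀ i, 0 ≤ astar i) (hne : astar ≠ 0)
    (hcent : Bmat u astar *ᵥ astar = astar) :
    IsLindahl u astar :=
  stmt7_general u hconc hdiff hCA hPE hirr astar hnn hne hcent
end

section
/- Let a* ∈ ℝ₊ⁿ be nonzero and suppose a* is a Lindahl outcome, i.e., there exists an n×n real price matrix P such that (i) for every i, Σ_{j≠i} P_ij a*_j ≤ a*_i Σ_{j≠i} P_ji, and (ii) for every i and every a ∈ ℝ₊ⁿ with Σ_{j≠i} P_ij a_j ≤ a_i Σ_{j≠i} P_ji, one has u_i(a*) ≥ u_i(a). Then a* satisfies the centrality property B(a*) a* = a*. -/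
open Matrix

/-
Each budget constraint is homogeneous in the profile, so every rescaling `t • a*`
with `t ≥ 0` stays affordable for every agent, and `t = 1` maximizes `t ↦ u_i (t • a*)`.
Hence the directional derivative `Du_i(a*) a* = (J(a*) a*)_i` vanishes, and dividing the
`i`-th row by `-J_ii(a*) ≠ 0` is exactly the equation `(B(a*) a*)_i = a*_i`.
-/

theorem BudgetOK.smul {n : ℕ} {P : Matrix (Fin n) (Fin n) ℝ} {i : Fin n} {x : Fin n → ℝ}
    (hx : BudgetOK P i x) {t : ℝ} (ht : 0 ≤ t) : BudgetOK P i (t • x) := by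
  unfold BudgetOK at hx ⊢
  simp only [Pi.smul_apply, smul_eq_mul, mul_left_comm _ t, ← Finset.mul_sum, mul_assoc]
  exact mul_le_mul_of_nonneg_left hx ht

theorem IsLindahl.isLocalMax_apply_smul {n : ℕ} {u : Fin n → (Fin n → ℝ) → ℝ}
    {a : Fin n → ℝ} (hlin : IsLindahl u a) (ha : ∀ j, 0 ≤ a j) (i : Fin n) :
    IsLocalMax (fun t : ℝ => u i (t • a)) 1 := by
  obtain ⟨P, hbudget, hopt⟩ := hlin
  filter_upwards [Ioi_mem_nhds zero_lt_one] with t ht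
  rw [one_smul]
  exact hopt i _ (fun j => mul_nonneg ht.le (ha j)) ((hbudget i).smul ht.le)

theorem fderiv_apply_self_eq_zero_of_isLocalMax_smul {E : Type*} [NormedAddCommGroup E]
    [NormedSpace ℝ E] {f : E → ℝ} {x : E} (hf : DifferentiableAt ℝ f x)
    (hmax : IsLocalMax (fun t : ℝ => f (t • x)) 1) : fderiv ℝ f x x = 0 := by
  have hray : HasDerivAt (fun t : ℝ => t • x) x 1 := by
    simpa using (hasDerivAt_id (1 : ℝ)).smul_const x
  have hf' : HasFDerivAt f (fderiv ℝ f x) ((1 : ℝ) • x) := by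
    rw [one_smul]
    exact hf.hasFDerivAt
  exact hmax.hasDerivAt_eq_zero (hf'.comp_hasDerivAt 1 hray)

theorem Jmat_mulVec_apply {n : ℕ} (u : Fin n → (Fin n → ℝ) → ℝ) (a x : Fin n → ℝ)
    (i : Fin n) : (Jmat u a *ᵥ x) i = fderiv ℝ (u i) a x := by
  conv_rhs => rw [← Finset.univ_sum_single x]
  simp only [map_sum, mulVec, dotProduct, Jmat, of_apply]
  refine Finset.sum_congr rfl fun j _ => ?_
  rw [mul_comm, ← smul_eq_mul, ← map_smul, ← Pi.single_smul, smul_eq_mul, mul_one]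

theorem Bmat_mulVec_apply {n : ℕ} (u : Fin n → (Fin n → ℝ) → ℝ) (a x : Fin n → ℝ)
    {i : Fin n} (hi : Jmat u a i i ≠ 0) :
    (Bmat u a *ᵥ x) i = x i - (Jmat u a *ᵥ x) i / Jmat u a i i := by
  simp only [mulVec, dotProduct, Bmat, of_apply]
  rw [← Finset.add_sum_erase _ _ (Finset.mem_univ i), ← Finset.add_sum_erase _ _ (Finset.mem_univ i),
    Finset.sum_congr rfl fun j hj => by
      rw [if_neg (Finset.ne_of_mem_erase hj).symm, div_mul_eq_mul_div],
    ← Finset.sum_div, if_pos rfl]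
  field_simp
  ring

theorem stmt8_general {n : ℕ}
    (u : Fin n → (Fin n → ℝ) → ℝ)
    (hdiff : ∀ i, ContDiff ℝ 1 (u i))
    (hCA : ∀ a ∈ nonnegOrthant n, ∀ i, Jmat u a i i < 0)
    (astar : Fin n → ℝ) (hnn : ∀ i, 0 ≤ astar i)
    (hlin : IsLindahl u astar) :
    Bmat u astar *ᵥ astar = astar := by
  funext i
  have hfoc : (Jmat u astar *ᵥ astar) i = 0 := by
    rw [Jmat_mulVec_apply]
    exact fderiv_apply_self_eq_zero_of_isLocalMax_smul
      ((hdiff i).differentiable one_ne_zero astar) (hlin.isLocalMax_apply_smul hnn i)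
  rw [Bmat_mulVec_apply u astar astar (hCA astar hnn i).ne, hfoc, zero_div, sub_zero]

/-- If a nonzero nonnegative profile `astar` is a Lindahl outcome, then it
has the centrality property `B(astar) astar = astar`. -/
theorem stmt8 {n : ℕ} (hn : 1 ≤ n)
    (u : Fin n → (Fin n → ℝ) → ℝ)
    (hconc : ∀ i, ConcaveOn ℝ (nonnegOrthant n) (u i))
    (hdiff : ∀ i, ContDiff ℝ 1 (u i))
    (hCA : ∀ a ∈ nonnegOrthant n, ∀ i, Jmat u a i i < 0)
    (hPE : ∀ a ∈ nonnegOrthant n, ∀ i j, i ≠ j → 0 ≤ Jmat u a i j)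
    (hirr : ∀ a ∈ nonnegOrthant n, MatIrreducible (Bmat u a))
    (astar : Fin n → ℝ) (hnn : ∀ i, 0 ≤ astar i) (hne : astar ≠ 0)
    (hlin : IsLindahl u astar) :
    Bmat u astar *ᵥ astar = astar :=
  stmt8_general u hdiff hCA astar hnn hlin
end
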